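/- arXiv:2407.16937 — 4 statements merged into one kernel-verified Lean document; each statement's English description precedes it below -/
import Mathlib

section
/- Let p be a prime and n a positive integer with p ∤ n. If g : (ℤ/pℤ)ˣ → ℂ takes values in ℚ(ζ_n) and ∑_{a ∈ (ℤ/pℤ)ˣ} g(a)·e^{2πia/p} = 1, then g(a) = -1 for all a ∈ (ℤ/pℤ)ˣ. -/
/-!
Since `p ∤ n`, the field `ℚ(ζ_n, ζ_p)` contains a primitive `pn`-th root of unity, so its degree
over `ℚ` is at least `φ(pn) = (p - 1) φ(n)`; hence `ζ_p` has degree `p - 1` over `ℚ(ζ_n)`, and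
`ζ_p, ζ_p², …, ζ_p^{p-1}` are linearly independent over `ℚ(ζ_n)`. These powers sum to `-1`, so the
hypothesis reads `∑ₐ (g(a) + 1) ζ_p^a = 0`, forcing `g(a) + 1 = 0` for every `a`.
-/

open Finset Polynomial IntermediateField

theorem Fintype.sum_units_eq_sum_sub_zero {G₀ M : Type*} [GroupWithZero G₀] [Fintype G₀]
    [DecidableEq G₀] [AddCommGroup M] (f : G₀ → M) : ∑ a : G₀ˣ, f a = ∑ x, f x - f 0 := by
  refine (Fintype.sum_equiv unitsEquivNeZero _ (fun x => f x.1) fun _ => rfl).trans ?_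
  rw [← sum_erase_eq_sub (mem_univ 0), ← sum_subtype]
  simp

theorem IsPrimitiveRoot.sum_pow_val_units {R : Type*} [CommRing R] [IsDomain R] {p : ℕ}
    [hp : Fact p.Prime] {ζ : R} (hζ : IsPrimitiveRoot ζ p) :
    ∑ a : (ZMod p)ˣ, ζ ^ (a : ZMod p).val = -1 := by
  let ψ := AddChar.zmodChar p hζ.pow_eq_one
  have hψ : ψ ≠ 1 := (AddChar.zmod_char_ne_one_iff p ψ).2 <| by
    simpa [ψ, AddChar.zmodChar_apply, ZMod.val_one] using hζ.ne_one hp.out.one_lt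
  have hsum := AddChar.sum_eq_zero_of_ne_one hψ
  simp only [ψ, AddChar.zmodChar_apply] at hsum
  rw [Fintype.sum_units_eq_sum_sub_zero (fun x : ZMod p => ζ ^ x.val), hsum]
  simp

theorem linearIndependent_pow_val_units {K L : Type*} [Field K] [Field L] [Algebra K L] {p : ℕ}
    [Fact p.Prime] {ζ : L} (hζ : ζ ≠ 0) (hdeg : (minpoly K ζ).natDegree = p - 1) :
    LinearIndependent K fun a : (ZMod p)ˣ => ζ ^ (a : ZMod p).val := by
  have hpow : LinearIndependent K fun i : Fin (p - 1) => ζ * ζ ^ (i : ℕ) :=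
    (hdeg ▸ linearIndependent_pow ζ).map' (LinearMap.mulLeft K ζ)
      (LinearMap.ker_eq_bot.mpr (mul_right_injective₀ hζ))
  have hval (a : (ZMod p)ˣ) : (a : ZMod p).val - 1 + 1 = (a : ZMod p).val :=
    Nat.sub_add_cancel (ZMod.val_pos.2 a.ne_zero)
  let e (a : (ZMod p)ˣ) : Fin (p - 1) :=
    ⟨(a : ZMod p).val - 1, by have := ZMod.val_lt (a : ZMod p); have := hval a; omega⟩
  have he : Function.Injective e := fun a b hab => Units.ext <| ZMod.val_injective p <| by
    have hab' : (a : ZMod p).val - 1 = (b : ZMod p).val - 1 := congrArg Fin.val hab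
    rw [← hval a, ← hval b, hab']
  convert hpow.comp e he using 1
  ext a
  simp [e, ← pow_succ', hval]

theorem IsPrimitiveRoot.finrank_adjoin_rat {L : Type*} [Field L] [CharZero L] {η : L} {n : ℕ}
    (hη : IsPrimitiveRoot η n) (hn : 0 < n) : Module.finrank ℚ ℚ⟮η⟯ = n.totient := by
  rw [adjoin.finrank (hη.isIntegral hn).tower_top, ← cyclotomic_eq_minpoly_rat hη hn,
    natDegree_cyclotomic]

theorem IsPrimitiveRoot.natDegree_minpoly_adjoin_of_coprime {L : Type*} [Field L] [CharZero L]
    {ζ η : L} {m n : ℕ} (hζ : IsPrimitiveRoot ζ m) (hη : IsPrimitiveRoot η n) (hm : 0 < m)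
    (hn : 0 < n) (hmn : m.Coprime n) : (minpoly ℚ⟮η⟯ ζ).natDegree = m.totient := by
  have hζK : IsIntegral ℚ⟮η⟯ ζ := (hζ.isIntegral hm).tower_top
  apply le_antisymm
  · have hdvd : minpoly ℚ⟮η⟯ ζ ∣ cyclotomic m ℚ⟮η⟯ := minpoly.dvd _ _ <| by
      rw [aeval_def, eval₂_eq_eval_map, map_cyclotomic]
      exact hζ.isRoot_cyclotomic hm
    exact (natDegree_le_of_dvd hdvd (cyclotomic_ne_zero m _)).trans_eq (natDegree_cyclotomic m _)
  · have : FiniteDimensional ℚ ℚ⟮η⟯ := adjoin.finiteDimensional (hη.isIntegral hn).tower_top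
    have : FiniteDimensional ℚ⟮η⟯ ℚ⟮η⟯⟮ζ⟯ := adjoin.finiteDimensional hζK
    have : FiniteDimensional ℚ ℚ⟮η⟯⟮ζ⟯ := Module.Finite.trans ℚ⟮η⟯ _
    have : Module.Free ℚ⟮η⟯ ℚ⟮η⟯⟮ζ⟯ := Module.Free.of_divisionRing _ _
    have hηE : η ∈ ℚ⟮η⟯⟮ζ⟯ := IntermediateField.algebraMap_mem _ (AdjoinSimple.gen ℚ η)
    have hcomp := IsPrimitiveRoot.lcm_totient_le_finrank (K := ℚ) (L := ℚ⟮η⟯⟮ζ⟯)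
      (x := AdjoinSimple.gen ℚ⟮η⟯ ζ) (y := ⟨η, hηE⟩)
      (IsPrimitiveRoot.coe_submonoidClass_iff.mp hζ) (IsPrimitiveRoot.coe_submonoidClass_iff.mp hη)
      (cyclotomic.irreducible_rat (Nat.lcm_pos hm hn))
    rw [← Module.finrank_mul_finrank ℚ ℚ⟮η⟯ ℚ⟮η⟯⟮ζ⟯, hη.finrank_adjoin_rat hn, adjoin.finrank hζK,
      hmn.lcm_eq_mul, Nat.totient_mul hmn, mul_comm] at hcomp
    exact Nat.le_of_mul_le_mul_left hcomp (Nat.totient_pos.mpr hn)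

/-- If `g : (ℤ/pℤ)ˣ → ℂ` takes values in `ℚ(ζ_n)` with `p ∤ n` and its Gauss sum
equals `1`, then `g ≡ -1`. -/
theorem stmt_1 (p n : ℕ) [Fact p.Prime] (hn : 0 < n) (hpn : ¬ p ∣ n)
    (g : (ZMod p)ˣ → ℂ)
    (hg : ∀ a : (ZMod p)ˣ,
      g a ∈ IntermediateField.adjoin ℚ {Complex.exp (2 * Real.pi * Complex.I / n)})
    (hτ : (∑ a : (ZMod p)ˣ,
        g a * Complex.exp (2 * Real.pi * Complex.I * ((a : ZMod p).val : ℂ) / p)) = 1) :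
    ∀ a : (ZMod p)ˣ, g a = -1 := by
  have hp : p.Prime := Fact.out
  set ζ : ℂ := Complex.exp (2 * Real.pi * Complex.I / p)
  have hζ : IsPrimitiveRoot ζ p := Complex.isPrimitiveRoot_exp p hp.ne_zero
  have hdeg := hζ.natDegree_minpoly_adjoin_of_coprime (Complex.isPrimitiveRoot_exp n hn.ne')
    hp.pos hn (hp.coprime_iff_not_dvd.2 hpn)
  rw [Nat.totient_prime hp] at hdeg
  have hind := linearIndependent_pow_val_units (hζ.ne_zero hp.ne_zero) hdeg
  have hexp (a : (ZMod p)ˣ) :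
      Complex.exp (2 * Real.pi * Complex.I * ((a : ZMod p).val : ℂ) / p) =
        ζ ^ (a : ZMod p).val := by
    rw [← Complex.exp_nat_mul]
    ring_nf
  simp only [hexp] at hτ
  let c (a : (ZMod p)ˣ) : ℚ⟮Complex.exp (2 * Real.pi * Complex.I / n)⟯ :=
    ⟨g a + 1, add_mem (hg a) (one_mem _)⟩
  have hc : ∑ a, c a • ζ ^ (a : ZMod p).val = 0 := calc
    ∑ a, c a • ζ ^ (a : ZMod p).val
        = ∑ a, g a * ζ ^ (a : ZMod p).val + ∑ a : (ZMod p)ˣ, ζ ^ (a : ZMod p).val := by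
      rw [← sum_add_distrib]
      exact sum_congr rfl fun a _ => add_one_mul (g a) _
    _ = 0 := by rw [hτ, hζ.sum_pow_val_units, add_neg_cancel]
  intro a
  exact eq_neg_of_add_eq_zero_left
    (congrArg Subtype.val (Fintype.linearIndependent_iff.mp hind c hc a))
end

section
/- Let p be prime and n ≥ 1 with p ∤ n, and let f : (ℤ/pℤ)ˣ → ℂˣ take values in n-th roots of unity (extended by f(0)=0, with Fourier transform f̂(ξ) = p^{-1/2} ∑_{x} f(x)e^{-2πixξ/p}). Then either |f̂(a)| = 1 for all a ∈ (ℤ/pℤ)ˣ, or |f̂(a)| ≠ 1 for all a ∈ (ℤ/pℤ)ˣ. -/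
/-!
For `b ∈ (ℤ/pℤ)ˣ`, since `p ∤ n` there is an automorphism of `ℚ(ζ_{np})` fixing the `n`-th roots
of unity and raising the `p`-th roots of unity to the power `b`. As the nonzero values of `f` are
`n`-th roots of unity, `|∑ f(x) ψ(xa)|² = (∑ f(x) ψ(xa)) (∑ f(x)⁻¹ ψ(-xa))` is the image of an
element of `ℚ(ζ_{np})` which this automorphism maps to the corresponding element for `ba`. So the
values `p |f̂(a)|²`, `a ∈ (ℤ/pℤ)ˣ`, are Galois conjugate, and one of them equals the rational
number `p` only if all of them do.
-/

open Complex ComplexConjugate IsCyclotomicExtension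

theorem IsCyclotomicExtension.Rat.exists_gal_eq_self_and_eq_pow (K : Type*) [Field K]
    [NumberField K] {n p : ℕ} [NeZero (n * p)] [IsCyclotomicExtension {n * p} ℚ K]
    (hnp : n.Coprime p) {k : ℕ} (hk : k.Coprime p) :
    ∃ σ : Gal(K/ℚ), (∀ x : K, x ^ n = 1 → σ x = x) ∧ ∀ x : K, x ^ p = 1 → σ x = x ^ k := by
  let c := Nat.chineseRemainder hnp 1 k
  have hc : (c : ℕ).Coprime (n * p) :=
    Nat.Coprime.mul_right (c.2.1.gcd_eq.trans (Nat.gcd_one_left n)) (c.2.2.gcd_eq.trans hk)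
  have hσ : ∀ x : K, x ^ (n * p) = 1 →
      (galEquivZMod (n * p) K).symm (ZMod.unitOfCoprime c hc) x = x ^ (c : ℕ) := by
    intro x hx
    rw [galEquivZMod_apply_of_pow_eq _ _ _ hx, MulEquiv.apply_symm_apply,
      ZMod.coe_unitOfCoprime, ZMod.val_natCast]
    exact pow_eq_pow_of_modEq (Nat.mod_modEq _ _) hx
  refine ⟨(galEquivZMod (n * p) K).symm (ZMod.unitOfCoprime c hc), fun x hx => ?_,
    fun x hx => ?_⟩
  · rw [hσ x (by rw [pow_mul, hx, one_pow]), pow_eq_pow_of_modEq c.2.1 hx, pow_one]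
  · rw [hσ x (by rw [mul_comm, pow_mul, hx, one_pow]), pow_eq_pow_of_modEq c.2.2 hx]

theorem exists_map_eq_of_pow_eq_one {K L : Type*} [CommRing K] [IsDomain K] [CommRing L]
    [IsDomain L] {φ : K →+* L} (hφ : Function.Injective φ) {μ : K} {m : ℕ} [NeZero m]
    (hμ : IsPrimitiveRoot μ m) {z : L} (hz : z ^ m = 1) : ∃ y, φ y = z := by
  obtain ⟨i, -, rfl⟩ := (hμ.map_of_injective hφ).eq_pow_of_pow_eq_one hz
  exact ⟨μ ^ i, map_pow φ μ i⟩

theorem AddChar.apply_pow_eq_one {p : ℕ} {M : Type*} [CommMonoid M] (ψ : AddChar (ZMod p) M)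
    (y : ZMod p) : ψ y ^ p = 1 := by
  rw [← mulShift_spec', mulShift_apply, ZMod.natCast_self, zero_mul, map_zero_eq_one]

theorem norm_inv_sqrt_mul_eq_one_iff {r : ℝ} (hr : 0 < r) (z : ℂ) :
    ‖(Real.sqrt r : ℂ)⁻¹ * z‖ = 1 ↔ normSq z = r := by
  rw [norm_mul, norm_inv, norm_real, Real.norm_of_nonneg (Real.sqrt_nonneg r),
    inv_mul_eq_one₀ (Real.sqrt_pos.2 hr).ne', eq_comm, norm_def,
    Real.sqrt_inj (normSq_nonneg z) hr.le]

section FourierSum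

variable {p : ℕ} [NeZero p]

def fourierSum {R : Type*} [CommRing R] (ψ : AddChar (ZMod p) R) (F : ZMod p → R)
    (a : ZMod p) : R :=
  ∑ x, F x * ψ (x * a)

/-- `normSq (fourierSum ψ F c)` with complex conjugation replaced by inversion (they agree on the
unit circle and at `0`), so that it makes sense in any field. -/
def fourierNormSq {K : Type*} [Field K] (ψ : AddChar (ZMod p) K) (F : ZMod p → K)
    (c : ZMod p) : K :=
  fourierSum ψ F c * fourierSum ψ (fun x => (F x)⁻¹) (-c)

theorem map_fourierSum {R R' G : Type*} [CommRing R] [CommRing R'] [FunLike G R R']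
    [RingHomClass G R R'] (φ : G) {ψ : AddChar (ZMod p) R} {ψ' : AddChar (ZMod p) R'}
    {F : ZMod p → R} {F' : ZMod p → R'} (hF : ∀ x, φ (F x) = F' x) (hψ : ∀ y, φ (ψ y) = ψ' y)
    (a : ZMod p) : φ (fourierSum ψ F a) = fourierSum ψ' F' a := by
  simp only [fourierSum, map_sum, map_mul, hF, hψ]

theorem map_fourierSum_eq_fourierSum_mul {R G : Type*} [CommRing R] [FunLike G R R]
    [RingHomClass G R R] (σ : G) {ψ : AddChar (ZMod p) R} {F : ZMod p → R} {k : ZMod p}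
    (hF : ∀ x, σ (F x) = F x) (hψ : ∀ y, σ (ψ y) = ψ (k * y)) (a : ZMod p) :
    σ (fourierSum ψ F a) = fourierSum ψ F (k * a) := by
  rw [fourierSum, map_sum]
  refine Finset.sum_congr rfl fun x _ => ?_
  rw [map_mul, hF, hψ, mul_left_comm]

theorem conj_fourierSum_stdAddChar (f : ZMod p → ℂ) (a : ZMod p) :
    conj (fourierSum ZMod.stdAddChar f a) =
      fourierSum ZMod.stdAddChar (fun x => conj (f x)) (-a) := by
  rw [fourierSum, map_sum]
  refine Finset.sum_congr rfl fun x _ => ?_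
  rw [map_mul, AddChar.starComp_apply (by rw [ZMod.ringChar_zmod_n]; exact NeZero.pos p),
    AddChar.inv_apply, mul_neg]

theorem sum_mul_exp_eq_fourierSum (f : ZMod p → ℂ) (a : ZMod p) :
    ∑ x : ZMod p, f x * exp (-(2 * Real.pi * I * (x.val : ℂ) * (a.val : ℂ) / p)) =
      fourierSum ZMod.stdAddChar f (-a) := by
  refine Finset.sum_congr rfl fun x _ => ?_
  have hxa : x * -a = ((-(x.val * a.val) : ℤ) : ZMod p) := by
    simp only [Int.cast_neg, Int.cast_mul, Int.cast_natCast, ZMod.natCast_zmod_val, mul_neg]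
  rw [hxa, ZMod.stdAddChar_coe]
  push_cast
  ring_nf

theorem fourierNormSq_mul_eq_of_eq_ratCast {K : Type*} [Field K] [NumberField K] {n : ℕ}
    [NeZero (n * p)] [IsCyclotomicExtension {n * p} ℚ K] (hnp : n.Coprime p)
    {ψ : AddChar (ZMod p) K} {F : ZMod p → K} (hF : ∀ x, F x = 0 ∨ F x ^ n = 1) {q : ℚ}
    {a : ZMod p} (ha : fourierNormSq ψ F a = q) (b : (ZMod p)ˣ) :
    fourierNormSq ψ F (b * a) = q := by
  obtain ⟨σ, hσn, hσp⟩ := Rat.exists_gal_eq_self_and_eq_pow K hnp (ZMod.val_coe_unit_coprime b)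
  have hσψ : ∀ y, σ (ψ y) = ψ (b * y) := fun y => by
    rw [hσp _ (ψ.apply_pow_eq_one y), ← AddChar.mulShift_spec', AddChar.mulShift_apply,
      ZMod.natCast_zmod_val]
  have hσF : ∀ x, σ (F x) = F x := fun x => (hF x).elim (fun h => by rw [h, map_zero]) (hσn _)
  have hσF' : ∀ x, σ (F x)⁻¹ = (F x)⁻¹ := fun x => by rw [map_inv₀, hσF]
  calc fourierNormSq ψ F (b * a)
      = σ (fourierNormSq ψ F a) := by
        rw [fourierNormSq, fourierNormSq, map_mul, map_fourierSum_eq_fourierSum_mul σ hσF hσψ,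
          map_fourierSum_eq_fourierSum_mul σ hσF' hσψ, mul_neg]
    _ = q := by rw [ha, map_ratCast]

theorem normSq_fourierSum_mul_eq_of_eq_ratCast {n : ℕ} [NeZero n] (hnp : n.Coprime p)
    {f : ZMod p → ℂ} (hf : ∀ x, f x = 0 ∨ f x ^ n = 1) {q : ℚ} {a : ZMod p}
    (ha : normSq (fourierSum ZMod.stdAddChar f a) = q) (b : (ZMod p)ˣ) :
    normSq (fourierSum ZMod.stdAddChar f (b * a)) = q := by
  let K := CyclotomicField (n * p) ℚ
  have : IsCyclotomicExtension {n * p} ℚ K := CyclotomicField.isCyclotomicExtension (n * p) ℚ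
  let φ : K →+* ℂ := (IsAlgClosed.lift : K →ₐ[ℚ] ℂ).toRingHom
  have hφ : Function.Injective φ := φ.injective
  have hlift : ∀ z : ℂ, z ^ (n * p) = 1 → ∃ y : K, φ y = z := fun z hz =>
    exists_map_eq_of_pow_eq_one hφ (zeta_spec (n * p) ℚ K) hz
  choose F hF using fun x => (hf x).elim (fun h => ⟨0, by rw [map_zero, h]⟩)
    fun h => hlift (f x) (by rw [pow_mul, h, one_pow])
  have hFn : ∀ x, F x = 0 ∨ F x ^ n = 1 := fun x =>
    (hf x).imp (fun h => hφ (by rw [hF, h, map_zero])) fun h => hφ (by rw [map_pow, hF, h, map_one])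
  obtain ⟨η, hη⟩ := hlift (ZMod.stdAddChar 1) (by
    rw [mul_comm, pow_mul, AddChar.apply_pow_eq_one, one_pow])
  let ψ := AddChar.zmodChar p (hφ (by rw [map_pow, hη, AddChar.apply_pow_eq_one, map_one]) :
    η ^ p = 1)
  have hψ : ∀ y, φ (ψ y) = ZMod.stdAddChar y := fun y => by
    rw [AddChar.zmodChar_apply, map_pow, hη, ← AddChar.mulShift_spec', AddChar.mulShift_apply,
      mul_one, ZMod.natCast_zmod_val]
  have hconj : ∀ x, φ (F x)⁻¹ = conj (f x) := fun x => by
    rw [map_inv₀, ← hF]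
    rcases hFn x with h | h
    · simp [h]
    · exact inv_eq_conj (norm_eq_one_of_pow_eq_one (by rw [← map_pow φ, h, map_one])
        (NeZero.ne n))
  have hφE : ∀ c, φ (fourierNormSq ψ F c) = normSq (fourierSum ZMod.stdAddChar f c) := fun c => by
    rw [fourierNormSq, map_mul, map_fourierSum φ hF hψ, map_fourierSum φ hconj hψ,
      ← conj_fourierSum_stdAddChar, mul_conj]
  have hEa : fourierNormSq ψ F a = q := hφ (by rw [hφE, ha, map_ratCast, ofReal_ratCast])
  have := hφE (b * a)
  rw [fourierNormSq_mul_eq_of_eq_ratCast hnp hFn hEa, map_ratCast] at this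
  exact_mod_cast this.symm

end FourierSum

/-- Dichotomy corollary: for `f : ℤ/pℤ → ℂ` with `f(0) = 0` valued in `n`-th roots of
unity on `(ℤ/pℤ)ˣ` with `p ∤ n`, either `|f̂(a)| = 1` for all `a ∈ (ℤ/pℤ)ˣ`, or
`|f̂(a)| ≠ 1` for all such `a`. -/
theorem stmt_7 (p n : ℕ) [Fact p.Prime] (hn : 0 < n) (hpn : ¬ p ∣ n)
    (f : ZMod p → ℂ) (hf0 : f 0 = 0)
    (hf : ∀ x : ZMod p, x ≠ 0 → f x ^ n = 1) :
    (∀ a : (ZMod p)ˣ, ‖((Real.sqrt p : ℂ)⁻¹ *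
        ∑ x : ZMod p, f x *
          Complex.exp (-(2 * Real.pi * Complex.I * (x.val : ℂ) * (((a : ZMod p).val : ℂ)) / p)))‖
      = 1)
    ∨ (∀ a : (ZMod p)ˣ, ‖((Real.sqrt p : ℂ)⁻¹ *
        ∑ x : ZMod p, f x *
          Complex.exp (-(2 * Real.pi * Complex.I * (x.val : ℂ) * (((a : ZMod p).val : ℂ)) / p)))‖
      ≠ 1) := by
  have hp : p.Prime := Fact.out
  have : NeZero n := ⟨hn.ne'⟩
  have hnp : n.Coprime p := (hp.coprime_iff_not_dvd.2 hpn).symm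
  have hf' : ∀ x, f x = 0 ∨ f x ^ n = 1 := fun x =>
    (eq_or_ne x 0).imp (fun h : x = 0 => h ▸ hf0) (hf x)
  simp only [sum_mul_exp_eq_fourierSum, norm_inv_sqrt_mul_eq_one_iff (Nat.cast_pos.2 hp.pos),
    ne_eq]
  by_cases h : ∃ a : (ZMod p)ˣ, normSq (fourierSum ZMod.stdAddChar f (-a)) = p
  · obtain ⟨a, ha⟩ := h
    refine Or.inl fun b => ?_
    have := normSq_fourierSum_mul_eq_of_eq_ratCast hnp hf' (q := p) (a := -a)
      (by rw [ha, Rat.cast_natCast]) (b * a⁻¹)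
    rwa [Units.val_mul, mul_neg, mul_assoc, Units.inv_mul, mul_one, Rat.cast_natCast] at this
  · exact Or.inr (not_exists.1 h)
end

section
/- Let p be prime, n ≥ 1 with p ∤ n, and f : ℤ/pℤ → ℂ with f(0) = 0, f(1) = 1, and f valued in n-th roots of unity on (ℤ/pℤ)ˣ. If |∑_{ℓ} f(ℓ)e^{2πiℓ/p}| = √p, then the autocorrelations satisfy ∑_{x ∈ ℤ/pℤ} f(x)·conj(f(x+h)) = -1 for every h ∈ (ℤ/pℤ)ˣ. -/
/-!
Expanding `|τ(f)|² = p` gives `∑_h g(h) ψ(-h) = p` for the autocorrelation `g` of `f`, while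
`g(0) = p - 1` because `|f| = 1` off `0`. Hence `∑_{h ≠ 0} g(-h) ψ(h) = 1 = -∑_{h ≠ 0} ψ(h)`, a
linear relation among `1, ζ_p, …, ζ_p^{p-1}` with coefficients `g(-h) + 1` in `ℚ(ζ_n)`. Since
`p ∤ n`, the minimal polynomial of `ζ_p` over `ℚ(ζ_n)` is `1 + x + ⋯ + x^{p-1}`, so the only such
relations have constant coefficients, and therefore `g(h) = -1` for every `h ≠ 0`.
-/

open Finset ComplexConjugate IntermediateField

theorem IsPrimitiveRoot.isAlgebraic_rat {ζ : ℂ} {n : ℕ} [NeZero n] (hζ : IsPrimitiveRoot ζ n) :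
    IsAlgebraic ℚ ζ :=
  (hζ.isIntegral (NeZero.pos n)).tower_top.isAlgebraic

theorem IsPrimitiveRoot.finrank_rat_adjoin {ζ : ℂ} {n : ℕ} [NeZero n] (hζ : IsPrimitiveRoot ζ n) :
    Module.finrank ℚ ℚ⟮ζ⟯ = n.totient := by
  have : IsCyclotomicExtension {n} ℚ ℚ⟮ζ⟯ := by
    change IsCyclotomicExtension {n} ℚ ℚ⟮ζ⟯.toSubalgebra
    rw [adjoin_simple_toSubalgebra_of_isAlgebraic hζ.isAlgebraic_rat]
    exact hζ.adjoin_isCyclotomicExtension ℚ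
  exact IsCyclotomicExtension.Rat.finrank n _

/-- `ℚ(μ, ζ)` is the `nm`-th cyclotomic field, of degree `φ(nm) = φ(n) φ(m)` over `ℚ`. -/
theorem IsPrimitiveRoot.natDegree_minpoly_adjoin_of_coprime_s10 {μ ζ : ℂ} {n m : ℕ} [NeZero n]
    [NeZero m] (hμ : IsPrimitiveRoot μ n) (hζ : IsPrimitiveRoot ζ m) (hnm : n.Coprime m) :
    (minpoly ℚ⟮μ⟯ ζ).natDegree = m.totient := by
  have hξ := Complex.isPrimitiveRoot_exp (n * m) (NeZero.ne _)
  have hpair : ℚ⟮μ, ζ⟯ = ℚ⟮Complex.exp (2 * Real.pi * Complex.I / (n * m : ℕ))⟯ := by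
    apply toSubalgebra_injective
    rw [adjoin_simple_toSubalgebra_of_isAlgebraic hξ.isAlgebraic_rat,
      adjoin_toSubalgebra_of_isAlgebraic (by simp [hμ.isAlgebraic_rat, hζ.isAlgebraic_rat])]
    exact hμ.adjoin_pair_eq ℚ hζ (NeZero.ne _) (NeZero.ne _) (hnm.lcm_eq_mul ▸ hξ)
  have htower := Module.finrank_mul_finrank ℚ ℚ⟮μ⟯ ℚ⟮μ⟯⟮ζ⟯
  change _ = Module.finrank ℚ (ℚ⟮μ⟯⟮ζ⟯.restrictScalars ℚ) at htower
  erw [adjoin_simple_adjoin_simple] at htower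
  rw [hpair, hξ.finrank_rat_adjoin, hμ.finrank_rat_adjoin, Nat.totient_mul hnm] at htower
  rw [← adjoin.finrank (hζ.isIntegral (NeZero.pos m)).tower_top]
  exact Nat.eq_of_mul_eq_mul_left (Nat.totient_pos.mpr (NeZero.pos n)) htower

theorem IsPrimitiveRoot.mem_adjoin_of_pow_eq_one {F L : Type*} [Field F] [Field L] [Algebra F L]
    {μ z : L} {n : ℕ} [NeZero n] (hμ : IsPrimitiveRoot μ n) (hz : z ^ n = 1) : z ∈ F⟮μ⟯ := by
  obtain ⟨i, -, rfl⟩ := hμ.eq_pow_of_pow_eq_one hz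
  exact pow_mem (mem_adjoin_simple_self F μ) i

/-- As `ζ` has degree `p - 1` over `K`, `∑ ζ^k = 0` is the only `K`-linear relation among
`1, ζ, …, ζ^{p-1}`. -/
theorem IsPrimitiveRoot.coeff_eq_of_sum_mul_pow_eq_zero {F L : Type*} [Field F] [Field L]
    [Algebra F L] {K : IntermediateField F L} {ζ : L} {p : ℕ} (hp : 1 < p)
    (hζ : IsPrimitiveRoot ζ p) (hdeg : (minpoly K ζ).natDegree = p - 1) {a : ℕ → L}
    (haK : ∀ k, a k ∈ K) (ha : ∑ k ∈ range p, a k * ζ ^ k = 0) {k : ℕ} (hk : k < p) :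
    a k = a 0 := by
  obtain ⟨q, rfl⟩ : ∃ q, p = q + 1 := ⟨p - 1, by omega⟩
  have hgeom := hζ.geom_sum_eq_zero hp
  rw [sum_range_succ] at ha hgeom
  have hrel : ∑ i : Fin q, (⟨a i - a q, sub_mem (haK i) (haK q)⟩ : K) • ζ ^ (i : ℕ) = 0 := by
    change ∑ i : Fin q, (a i - a q) * ζ ^ (i : ℕ) = 0
    rw [Fin.sum_univ_eq_sum_range (fun i => (a i - a q) * ζ ^ i)]
    simp only [sub_mul, sum_sub_distrib, ← mul_sum]
    linear_combination ha - a q * hgeom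
  have hli := linearIndependent_pow (K := K) ζ
  rw [hdeg, Nat.add_sub_cancel] at hli
  have hconst : ∀ i < q, a i = a q := fun i hi =>
    sub_eq_zero.mp (congrArg Subtype.val (Fintype.linearIndependent_iff.mp hli _ hrel ⟨i, hi⟩))
  rw [hconst 0 (by omega)]
  rcases (Nat.lt_succ_iff.mp hk).lt_or_eq with hk | rfl
  · exact hconst k hk
  · rfl

namespace ZMod

theorem sum_val_eq_sum_range {M : Type*} [AddCommMonoid M] (p : ℕ) [NeZero p] (F : ℕ → M) :
    ∑ h : ZMod p, F h.val = ∑ k ∈ range p, F k := by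
  obtain ⟨q, rfl⟩ : ∃ q, p = q + 1 := ⟨p - 1, (Nat.succ_pred_eq_of_ne_zero (NeZero.ne p)).symm⟩
  exact Fin.sum_univ_eq_sum_range F (q + 1)

theorem stdAddChar_eq_pow {p : ℕ} [NeZero p] (h : ZMod p) :
    stdAddChar h = Complex.exp (2 * Real.pi * Complex.I / p) ^ h.val := by
  have h1 : stdAddChar (1 : ZMod p) = Complex.exp (2 * Real.pi * Complex.I / p) := by
    simpa using stdAddChar_coe (N := p) 1
  conv_lhs => rw [← natCast_zmod_val h, ← nsmul_one, AddChar.map_nsmul_eq_pow, h1]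

theorem eq_of_sum_mul_stdAddChar_eq_zero {μ : ℂ} {n p : ℕ} [NeZero n] [Fact p.Prime]
    (hμ : IsPrimitiveRoot μ n) (hpn : ¬ p ∣ n) {c : ZMod p → ℂ} (hcK : ∀ h, c h ∈ ℚ⟮μ⟯)
    (hc : ∑ h, c h * stdAddChar h = 0) (h : ZMod p) : c h = c 0 := by
  have hp : p.Prime := Fact.out
  have hζ := Complex.isPrimitiveRoot_exp p hp.ne_zero
  have hdeg := hμ.natDegree_minpoly_adjoin_of_coprime_s10 hζ
    (Nat.coprime_comm.mp ((Nat.Prime.coprime_iff_not_dvd hp).mpr hpn))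
  rw [Nat.totient_prime hp] at hdeg
  simp_rw [stdAddChar_eq_pow] at hc
  have hc' : ∑ k ∈ range p, c k * Complex.exp (2 * Real.pi * Complex.I / p) ^ k = 0 := by
    rw [← sum_val_eq_sum_range p (fun k => c k * _ ^ k)]
    simpa using hc
  simpa using hζ.coeff_eq_of_sum_mul_pow_eq_zero hp.one_lt hdeg (fun k => hcK k) hc' (val_lt h)

end ZMod

section Autocorrelation

variable {G : Type*} [AddCommGroup G] [Fintype G]

noncomputable def autocorrelation (f : G → ℂ) (h : G) : ℂ :=
  ∑ x, f x * conj (f (x + h))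

theorem norm_sum_mul_addChar_sq (f : G → ℂ) (ψ : AddChar G ℂ) :
    (‖∑ x, f x * ψ x‖ : ℂ) ^ 2 = ∑ h, autocorrelation f (-h) * ψ h := by
  rw [← Complex.mul_conj']
  conv_rhs => rw [← Equiv.sum_comp (Equiv.neg G)]
  simp_rw [Equiv.neg_apply, neg_neg, map_sum, sum_mul_sum, autocorrelation, sum_mul]
  rw [sum_comm (s := univ) (t := univ) (f := fun h x => f x * conj (f (x + h)) * ψ (-h))]
  refine sum_congr rfl fun x _ => (Fintype.sum_equiv (Equiv.addLeft x) _ _ fun h => ?_).symm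
  rw [Equiv.coe_addLeft, map_mul, ← AddChar.map_neg_eq_conj, mul_mul_mul_comm,
    ← AddChar.map_add_eq_mul, neg_add, add_neg_cancel_left]

theorem autocorrelation_zero_of_norm_eq_one {f : G → ℂ} (hf0 : f 0 = 0)
    (hf : ∀ x, x ≠ 0 → ‖f x‖ = 1) : autocorrelation f 0 = Fintype.card G - 1 := by
  classical
  rw [autocorrelation, ← add_sum_erase _ _ (mem_univ 0), hf0, zero_mul, zero_add,
    sum_congr rfl fun x hx => by rw [add_zero, Complex.mul_conj', hf x (ne_of_mem_erase hx)],
    sum_const, card_erase_of_mem (mem_univ 0), card_univ]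
  simp [Nat.cast_sub Fintype.card_pos]

theorem autocorrelation_mem_adjoin {μ : ℂ} {n : ℕ} [NeZero n] (hμ : IsPrimitiveRoot μ n)
    {f : G → ℂ} (hf0 : f 0 = 0) (hf : ∀ x, x ≠ 0 → f x ^ n = 1) (h : G) :
    autocorrelation f h ∈ ℚ⟮μ⟯ := by
  have hfK (x : G) : f x ∈ ℚ⟮μ⟯ ∧ conj (f x) ∈ ℚ⟮μ⟯ := by
    by_cases hx : x = 0
    · simp [hx, hf0]
    · exact ⟨hμ.mem_adjoin_of_pow_eq_one (hf x hx),
        hμ.mem_adjoin_of_pow_eq_one (by rw [← map_pow, hf x hx, map_one])⟩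
  exact sum_mem fun x _ => mul_mem (hfK x).1 (hfK (x + h)).2

end Autocorrelation

theorem stmt_10_general (p n : ℕ) [Fact p.Prime] (hn : 0 < n) (hpn : ¬ p ∣ n)
    (f : ZMod p → ℂ) (hf0 : f 0 = 0)
    (hf : ∀ x : ZMod p, x ≠ 0 → f x ^ n = 1)
    (hτ : ‖(∑ l : ZMod p,
        f l * Complex.exp (2 * Real.pi * Complex.I * (l.val : ℂ) / p))‖ = Real.sqrt p) :
    ∀ h : (ZMod p)ˣ,
      ∑ x : ZMod p, f x * (starRingEnd ℂ) (f (x + (h : ZMod p))) = -1 := by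
  have : NeZero n := ⟨hn.ne'⟩
  set μ := Complex.exp (2 * Real.pi * Complex.I / n)
  have hμ : IsPrimitiveRoot μ n := Complex.isPrimitiveRoot_exp n hn.ne'
  have hnorm : (‖∑ l, f l * ZMod.stdAddChar l‖ : ℂ) ^ 2 = p := by
    simp_rw [ZMod.stdAddChar_apply, ZMod.toCircle_apply, hτ]
    rw [← Complex.ofReal_pow, Real.sq_sqrt p.cast_nonneg, Complex.ofReal_natCast]
  set c : ZMod p → ℂ := fun h => autocorrelation f (-h) - if h = 0 then (p : ℂ) else 0
  have hcK (h : ZMod p) : c h ∈ ℚ⟮μ⟯ :=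
    sub_mem (autocorrelation_mem_adjoin hμ hf0 hf _) (by split_ifs <;> simp)
  have hc : ∑ h, c h * ZMod.stdAddChar h = 0 := by
    simp only [c, sub_mul, sum_sub_distrib, ite_mul, zero_mul, sum_ite_eq', mem_univ, if_true,
      AddChar.map_zero_eq_one, mul_one]
    rw [← norm_sum_mul_addChar_sq, hnorm, sub_self]
  have hc0 : c 0 = -1 := by
    simp [c, autocorrelation_zero_of_norm_eq_one hf0 fun x hx =>
      Complex.norm_eq_one_of_pow_eq_one (hf x hx) hn.ne']
  intro h
  have hch : c (-h) = autocorrelation f h := by simp [c, h.ne_zero]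
  change autocorrelation f h = -1
  rw [← hc0, ← hch]
  exact ZMod.eq_of_sum_mul_stdAddChar_eq_zero hμ hpn hcK hc (-h)

/-- If `|τ(f)| = √p` for `f : ℤ/pℤ → ℂ` with `f(0) = 0`, `f(1) = 1`, valued in `n`-th
roots of unity on `(ℤ/pℤ)ˣ` with `p ∤ n`, then all off-diagonal autocorrelations
equal `-1`. -/
theorem stmt_10 (p n : ℕ) [Fact p.Prime] (hn : 0 < n) (hpn : ¬ p ∣ n)
    (f : ZMod p → ℂ) (hf0 : f 0 = 0) (hf1 : f 1 = 1)
    (hf : ∀ x : ZMod p, x ≠ 0 → f x ^ n = 1)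
    (hτ : ‖(∑ l : ZMod p,
        f l * Complex.exp (2 * Real.pi * Complex.I * (l.val : ℂ) / p))‖ = Real.sqrt p) :
    ∀ h : (ZMod p)ˣ,
      ∑ x : ZMod p, f x * (starRingEnd ℂ) (f (x + (h : ZMod p))) = -1 :=
  stmt_10_general p n hn hpn f hf0 hf hτ
end

section
/- For p = 3, the function f : (ℤ/3ℤ)ˣ → ℂˣ defined by f(1) = 1 and f(2) = e^{2πi·5/6} satisfies |τ(f)| = √3 but is not a multiplicative character, showing that the hypothesis p ∤ n in the converse-to-Gauss theorem is necessary. -/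
/-!
Since `(ℤ/3ℤ)ˣ = {1, -1}`, we get `τ(f) = ω + e^{2πi·5/6} ω² = ω + e^{3πi} = ω - 1` with
`ω = e^{2πi/3}`, and `|ω - 1| = 2 sin(π/3) = √3`. On the other hand every character `χ` has
`χ(-1)² = χ(1) = 1`, whereas `f(-1) = ζ⁵` for a primitive sixth root of unity `ζ`, and `ζ¹⁰ ≠ 1`.
-/

open Complex
open scoped Real

lemma ZMod.univ_units_three : (Finset.univ : Finset (ZMod 3)ˣ) = {1, -1} := by decide

lemma norm_exp_two_pi_I_div_three_sub_one : ‖exp (2 * π * I / 3) - 1‖ = √3 := by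
  rw [show 2 * π * I / 3 = I * ((2 * π / 3 : ℝ) : ℂ) by push_cast; ring,
    norm_exp_I_mul_ofReal_sub_one, show 2 * π / 3 / 2 = π / 3 by ring, Real.sin_pi_div_three]
  simp [abs_of_nonneg (Real.sqrt_nonneg 3), mul_div_cancel₀]

lemma exp_two_pi_I_mul_five_sixths_sq_ne_one : exp (2 * π * I * (5 / 6)) ^ 2 ≠ 1 := by
  rw [show 2 * π * I * (5 / 6) = (5 : ℕ) * (2 * π * I / (6 : ℕ)) by push_cast; ring,
    exp_nat_mul, ← pow_mul, Ne, (isPrimitiveRoot_exp 6 (by norm_num)).pow_eq_one_iff_dvd]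
  norm_num

lemma exp_two_pi_I_mul_five_sixths_add_two_thirds :
    exp (2 * π * I * (5 / 6) + 2 * π * I * (2 : ℕ) / 3) = -1 := by
  rw [show 2 * π * I * (5 / 6) + 2 * π * I * (2 : ℕ) / 3 = π * I + 2 * π * I by push_cast; ring,
    exp_add, exp_pi_mul_I, exp_two_pi_mul_I, mul_one]

/-- For `p = 3`, the function with `f(1) = 1`, `f(2) = e^{2πi·5/6}` has `|τ(f)| = √3`
but is not a multiplicative character: the hypothesis `p ∤ n` is necessary. -/
theorem stmt_12 (f : (ZMod 3)ˣ → ℂ)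
    (hf : ∀ a : (ZMod 3)ˣ, f a =
      if (a : ZMod 3) = 1 then 1 else Complex.exp (2 * Real.pi * Complex.I * (5 / 6))) :
    ‖(∑ a : (ZMod 3)ˣ,
        f a * Complex.exp (2 * Real.pi * Complex.I * ((a : ZMod 3).val : ℂ) / 3))‖
      = Real.sqrt 3
    ∧ ¬ ∃ χ : (ZMod 3)ˣ →* ℂˣ, ∀ a : (ZMod 3)ˣ, f a = χ a := by
  have f_one : f 1 = 1 := by rw [hf, if_pos Units.val_one]
  have f_neg_one : f (-1) = exp (2 * π * I * (5 / 6)) := by rw [hf, if_neg (by decide)]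
  constructor
  · have val_one : ((1 : (ZMod 3)ˣ) : ZMod 3).val = 1 := rfl
    have val_neg_one : ((-1 : (ZMod 3)ˣ) : ZMod 3).val = 2 := rfl
    rw [ZMod.univ_units_three, Finset.sum_pair (by decide), f_one, f_neg_one, val_one,
      val_neg_one, one_mul, ← exp_add, exp_two_pi_I_mul_five_sixths_add_two_thirds,
      Nat.cast_one, mul_one, ← sub_eq_add_neg, norm_exp_two_pi_I_div_three_sub_one]
  · rintro ⟨χ, hχ⟩
    apply exp_two_pi_I_mul_five_sixths_sq_ne_one
    rw [← f_neg_one, hχ, ← Units.val_pow_eq_pow_val, ← map_pow, neg_one_sq, map_one,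
      Units.val_one]
end
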